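/- Let f : M → M' be an R-module homomorphism with t • ker(f) = 0 for some t ∈ S. If M' is an S-comultiplication module, then M is an S-comultiplication module. -/

import Mathlib

open Pointwise

/-- A multiplicatively closed set: `0 ∉ S`, `1 ∈ S`, closed under multiplication. -/
def IsMCS {R : Type*} [CommRing R] (S : Set R) : Prop :=
  (0 : R) ∉ S ∧ (1 : R) ∈ S ∧ ∀ s ∈ S, ∀ t ∈ S, s * t ∈ S

/-- The submodule `(0 :_M I) = {m ∈ M : I • m = 0}`. -/
def resid (R M : Type*) [CommRing R] [AddCommGroup M] [Module R M] (I : Ideal R) :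
    Submodule R M where
  carrier := {m | ∀ a ∈ I, a • m = 0}
  add_mem' := by
    intro x y hx hy a ha
    rw [smul_add, hx a ha, hy a ha, add_zero]
  zero_mem' := by
    intro a _
    rw [smul_zero]
  smul_mem' := by
    intro r x hx a ha
    rw [smul_comm, hx a ha, smul_zero]

/-- `M` is an `S`-comultiplication module: for each submodule `N` there exist `s ∈ S` and an
ideal `I` with `s • (0 :_M I) ⊆ N ⊆ (0 :_M I)`. -/
def IsSComult (R M : Type*) [CommRing R] [AddCommGroup M] [Module R M] (S : Set R) : Prop :=
  ∀ N : Submodule R M, ∃ s ∈ S, ∃ I : Ideal R,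
    (∀ m ∈ resid R M I, s • m ∈ N) ∧ N ≤ resid R M I

/-- `M` is a comultiplication module: every submodule `N` equals `(0 :_M ann N)`. -/
def IsComult (R M : Type*) [CommRing R] [AddCommGroup M] [Module R M] : Prop :=
  ∀ N : Submodule R M, N = resid R M N.annihilator

/-
Take `N ≤ M` and apply the hypothesis on `M'` to `f(N)`: `s • (0 :_{M'} I) ⊆ f(N) ⊆ (0 :_{M'} I)`.
The containment `f(N) ⊆ (0 :_{M'} I)` says `I • N ⊆ ker f`, so `t • I ⊆ ann N`. Hence for
`m ∈ (0 :_M ann N)` the element `f(t • m)` lies in `(0 :_{M'} I)`, so `s • f(t • m) ∈ f(N)`, and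
since `t` kills `ker f`, `t • s • t • m ∈ N`. Thus `ann N` and `t * s * t ∈ S` witness the
`S`-comultiplication property for `N`.
-/

section Resid

variable {R M M' : Type*} [CommRing R] [AddCommGroup M] [Module R M]
  [AddCommGroup M'] [Module R M']

theorem le_resid_annihilator (N : Submodule R M) : N ≤ resid R M N.annihilator :=
  fun n hn _ ha => Submodule.mem_annihilator.mp ha n hn

theorem map_mem_resid (f : M →ₗ[R] M') {I : Ideal R} {m : M} (hm : m ∈ resid R M I) :
    f m ∈ resid R M' I := fun a ha => by
  rw [← map_smul, hm a ha, map_zero]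

theorem smul_mem_resid_of_mul_mem {I J : Ideal R} {t : R} (hIJ : ∀ a ∈ I, t * a ∈ J) {m : M}
    (hm : m ∈ resid R M J) : t • m ∈ resid R M I := fun a ha => by
  rw [smul_smul, mul_comm, hm _ (hIJ a ha)]

theorem smul_mem_of_map_mem_map {f : M →ₗ[R] M'} {t : R}
    (hker : ∀ x ∈ LinearMap.ker f, t • x = 0) {N : Submodule R M} {m : M} (hm : f m ∈ N.map f) :
    t • m ∈ N := by
  obtain ⟨n, hn, hfn⟩ := hm
  have hdiff : m - n ∈ LinearMap.ker f := by
    rw [LinearMap.mem_ker, map_sub, hfn, sub_self]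
  have htn : t • m = t • n := sub_eq_zero.mp (by rw [← smul_sub, hker _ hdiff])
  exact htn ▸ N.smul_mem t hn

theorem mul_mem_annihilator_of_map_le_resid {f : M →ₗ[R] M'} {t : R}
    (hker : ∀ x ∈ LinearMap.ker f, t • x = 0) {N : Submodule R M} {I : Ideal R}
    (hNI : N.map f ≤ resid R M' I) : ∀ a ∈ I, t * a ∈ N.annihilator := by
  intro a ha
  rw [Submodule.mem_annihilator]
  intro n hn
  have hfan : a • f n = 0 := hNI (Submodule.mem_map_of_mem hn) a ha
  rw [mul_smul, hker _ (by rw [LinearMap.mem_ker, map_smul, hfan])]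

end Resid

theorem stmt8 (R M M' : Type*) [CommRing R] [AddCommGroup M] [Module R M]
    [AddCommGroup M'] [Module R M'] (S : Set R) (hS : IsMCS S)
    (f : M →ₗ[R] M') (t : R) (ht : t ∈ S) (hker : ∀ x ∈ LinearMap.ker f, t • x = 0)
    (h : IsSComult R M' S) : IsSComult R M S := by
  intro N
  obtain ⟨s, hs, I, hsI, hNI⟩ := h (N.map f)
  have htI := mul_mem_annihilator_of_map_le_resid hker hNI
  refine ⟨t * (s * t), hS.2.2 t ht _ (hS.2.2 s hs t ht), N.annihilator, ?_,
    le_resid_annihilator N⟩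
  intro m hm
  have hfm : f ((s * t) • m) ∈ N.map f := by
    rw [mul_smul, map_smul]
    exact hsI _ (map_mem_resid f (smul_mem_resid_of_mul_mem htI hm))
  rw [mul_smul]
  exact smul_mem_of_map_mem_map hker hfm
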